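/- Fix α > 0 and P_FA ∈ (0, e^{−2}), define f : [0,∞) → ℝ by f(P) = exp(ln(P_FA)/(1 + αP)), let P_t > 0 be the unique positive real with f(P_t) − f(0) = f′(P_t)·P_t, and set λ_t := (f(P_t) − f(0))/P_t. Then for every P with 0 ≤ P ≤ P_t, the supremum of ∫ f dμ over all Borel probability measures μ on [0,∞) satisfying ∫ ξ dμ(ξ) ≤ P equals f(0) + λ_t·P, and it is attained by the two-point measure μ* = (1 − P/P_t)·δ_0 + (P/P_t)·δ_{P_t}. -/

import Mathlib

lemma hasDerivAt_g (c α x : ℝ) (hu : 1 + α*x ≠ 0) :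
    HasDerivAt (fun y => Real.exp (c/(1+α*y)))
      (Real.exp (c/(1+α*x)) * (-(c*α)/(1+α*x)^2)) x := by
  have h1 : HasDerivAt (fun y : ℝ => 1 + α*y) α x := by
    simpa using ((hasDerivAt_id x).const_mul α).const_add 1
  have h2 : HasDerivAt (fun y => c/(1+α*y)) (-(c*α)/(1+α*x)^2) x := by
    have h : HasDerivAt (fun y => c/(1+α*y)) _ x := (hasDerivAt_const x c).div h1 hu
    convert h using 1
    ring
  exact h2.exp

lemma hasDerivAt_g1 (c α x : ℝ) (hu : 1 + α*x ≠ 0) :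
    HasDerivAt (fun y => Real.exp (c/(1+α*y)) * (-(c*α)/(1+α*y)^2))
      (c*α^2 * Real.exp (c/(1+α*x)) * (c + 2*(1+α*x)) / (1+α*x)^4) x := by
  have h1 : HasDerivAt (fun y : ℝ => 1 + α*y) α x := by
    simpa using ((hasDerivAt_id x).const_mul α).const_add 1
  have hsq : HasDerivAt (fun y : ℝ => (1+α*y)^2) (2*(1+α*x)*α) x := by
    have : HasDerivAt (fun y : ℝ => (1+α*y)^2) _ x := h1.pow 2
    convert this using 1
    ring
  have hinv : HasDerivAt (fun y : ℝ => -(c*α)/(1+α*y)^2)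
      ((0 * (1+α*x)^2 - (-(c*α)) * (2*(1+α*x)*α)) / ((1+α*x)^2)^2) x :=
    (hasDerivAt_const x (-(c*α))).div hsq (pow_ne_zero 2 hu)
  have h : HasDerivAt (fun y => Real.exp (c/(1+α*y)) * (-(c*α)/(1+α*y)^2)) _ x :=
    (hasDerivAt_g c α x hu).mul hinv
  convert h using 1
  field_simp
  ring

lemma key (α c : ℝ) (hα : 0 < α) (hc : c < -2) (Pt : ℝ) (hPt : 0 < Pt)
    (htan : Real.exp (c/(1+α*Pt)) - Real.exp c
      = (Real.exp (c/(1+α*Pt)) * (-(c*α)/(1+α*Pt)^2)) * Pt) :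
    ∀ ξ, 0 ≤ ξ → Real.exp (c/(1+α*ξ))
      ≤ Real.exp c + (Real.exp (c/(1+α*Pt)) * (-(c*α)/(1+α*Pt)^2)) * ξ := by
  set g : ℝ → ℝ := fun y => Real.exp (c/(1+α*y)) with hgdef
  set g1 : ℝ → ℝ := fun y => Real.exp (c/(1+α*y)) * (-(c*α)/(1+α*y)^2) with hg1def
  set g2 : ℝ → ℝ := fun y => c*α^2 * Real.exp (c/(1+α*y)) * (c + 2*(1+α*y)) / (1+α*y)^4
    with hg2def
  set L : ℝ := g1 Pt with hLdef
  set h : ℝ → ℝ := fun y => Real.exp c + L*y - g y with hhdef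
  have hupos : ∀ x : ℝ, 0 ≤ x → 0 < 1 + α*x := fun x hx => by nlinarith
  have hune : ∀ x : ℝ, 0 ≤ x → 1 + α*x ≠ 0 := fun x hx => (hupos x hx).ne'
  have hg' : ∀ x : ℝ, 0 ≤ x → HasDerivAt g (g1 x) x := fun x hx =>
    hasDerivAt_g c α x (hune x hx)
  have hg1' : ∀ x : ℝ, 0 ≤ x → HasDerivAt g1 (g2 x) x := fun x hx =>
    hasDerivAt_g1 c α x (hune x hx)
  have hh' : ∀ x : ℝ, 0 ≤ x → HasDerivAt h (L - g1 x) x := by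
    intro x hx
    have h1 : HasDerivAt (fun y : ℝ => Real.exp c + L*y) L x := by
      simpa using ((hasDerivAt_id x).const_mul L).const_add (Real.exp c)
    exact h1.sub (hg' x hx)
  have hderivh : ∀ x : ℝ, 0 ≤ x → deriv h x = L - g1 x := fun x hx => (hh' x hx).deriv
  -- the inflection point
  set xs : ℝ := ((-c)/2 - 1)/α with hxsdef
  have hxs : 0 < xs := div_pos (by linarith) hα
  have huxs : 1 + α*xs = -c/2 := by
    rw [hxsdef]; field_simp; ring
  have hg2pos : ∀ x : ℝ, 0 ≤ x → x < xs → 0 < g2 x := by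
    intro x hx hxxs
    have h1 : c + 2*(1+α*x) < 0 := by nlinarith [huxs]
    have h2 : (0:ℝ) < (1+α*x)^4 := by positivity
    have he : 0 < Real.exp (c/(1+α*x)) := Real.exp_pos _
    have hca : c*α^2 < 0 := mul_neg_of_neg_of_pos (by linarith) (by positivity)
    have hA : c*α^2*Real.exp (c/(1+α*x)) < 0 := mul_neg_of_neg_of_pos hca he
    exact div_pos (mul_pos_of_neg_of_neg hA h1) h2
  have hg2neg : ∀ x : ℝ, xs < x → g2 x < 0 := by
    intro x hxxs
    have hx : (0:ℝ) ≤ x := le_of_lt (lt_trans hxs hxxs)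
    have h1 : 0 < c + 2*(1+α*x) := by nlinarith [huxs]
    have h2 : (0:ℝ) < (1+α*x)^4 := by positivity
    have he : 0 < Real.exp (c/(1+α*x)) := Real.exp_pos _
    have hca : c*α^2 < 0 := mul_neg_of_neg_of_pos (by linarith) (by positivity)
    have hA : c*α^2*Real.exp (c/(1+α*x)) < 0 := mul_neg_of_neg_of_pos hca he
    exact div_neg_of_neg_of_pos (mul_neg_of_neg_of_pos hA h1) h2
  -- g1 strictly decreasing on [xs, ∞)
  have hg1anti : StrictAntiOn g1 (Set.Ici xs) := by
    apply strictAntiOn_of_deriv_neg (convex_Ici xs)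
    · intro x hx
      exact (hg1' x (le_trans hxs.le hx)).continuousAt.continuousWithinAt
    · intro x hx
      rw [interior_Ici] at hx
      rw [(hg1' x (le_of_lt (lt_trans hxs hx))).deriv]
      exact hg2neg x hx
  have hg0 : g 0 = Real.exp c := by simp [hgdef]
  -- xs < Pt
  have hxsPt : xs < Pt := by
    by_contra hcon
    push_neg at hcon
    set G : ℝ → ℝ := fun y => g y - Real.exp c - g1 y * y with hGdef
    have hG' : ∀ x : ℝ, 0 ≤ x → HasDerivAt G (g1 x - (g2 x * x + g1 x * 1)) x := fun x hx =>
      ((hg' x hx).sub_const (Real.exp c)).sub ((hg1' x hx).mul (hasDerivAt_id x))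
    have hGanti : StrictAntiOn G (Set.Icc 0 xs) := by
      apply strictAntiOn_of_deriv_neg (convex_Icc 0 xs)
      · intro x hx
        exact (hG' x hx.1).continuousAt.continuousWithinAt
      · intro x hx
        rw [interior_Icc] at hx
        rw [(hG' x hx.1.le).deriv]
        have := hg2pos x hx.1.le hx.2
        nlinarith [hx.1]
    have hG0 : G 0 = 0 := by simp [hGdef, hg0]
    have hGPt : G Pt = 0 := by
      simp only [hGdef]
      have := htan
      simp only [hgdef, hg1def] at *
      linarith
    have h1 : G Pt < G 0 :=
      hGanti ⟨le_refl 0, hxs.le⟩ ⟨hPt.le, hcon⟩ hPt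
    rw [hG0, hGPt] at h1
    exact lt_irrefl 0 h1
  have hhPt : h Pt = 0 := by
    simp only [hhdef, hLdef]
    simp only [hgdef, hg1def] at htan ⊢
    linarith
  -- on [Pt, ∞)
  have hmonoPt : MonotoneOn h (Set.Ici Pt) := by
    apply monotoneOn_of_deriv_nonneg (convex_Ici Pt)
    · intro x hx
      exact (hh' x (le_trans hPt.le hx)).continuousAt.continuousWithinAt
    · intro x hx
      rw [interior_Ici] at hx
      exact (hh' x (le_of_lt (lt_trans hPt hx))).differentiableAt.differentiableWithinAt
    · intro x hx
      rw [interior_Ici] at hx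
      rw [hderivh x (le_of_lt (lt_trans hPt hx))]
      have := hg1anti (Set.mem_Ici.2 hxsPt.le) (Set.mem_Ici.2 (le_of_lt (lt_trans hxsPt hx))) hx
      linarith
  -- on [xs, Pt]
  have hantiMid : AntitoneOn h (Set.Icc xs Pt) := by
    apply antitoneOn_of_deriv_nonpos (convex_Icc xs Pt)
    · intro x hx
      exact (hh' x (le_trans hxs.le hx.1)).continuousAt.continuousWithinAt
    · intro x hx
      rw [interior_Icc] at hx
      exact (hh' x (le_trans hxs.le hx.1.le)).differentiableAt.differentiableWithinAt
    · intro x hx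
      rw [interior_Icc] at hx
      rw [hderivh x (le_trans hxs.le hx.1.le)]
      have := hg1anti (Set.mem_Ici.2 hx.1.le) (Set.mem_Ici.2 hxsPt.le) hx.2
      linarith
  have hmid : ∀ ξ ∈ Set.Icc xs Pt, 0 ≤ h ξ := by
    intro ξ hξ
    have := hantiMid hξ (Set.mem_Icc.2 ⟨hxsPt.le, le_refl Pt⟩) hξ.2
    linarith [hhPt]
  have hhi : ∀ ξ, Pt ≤ ξ → 0 ≤ h ξ := by
    intro ξ hξ
    have := hmonoPt (Set.mem_Ici.2 (le_refl Pt)) (Set.mem_Ici.2 hξ) hξ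
    linarith [hhPt]
  -- concavity on [0, xs]
  have hg1mono : MonotoneOn g1 (Set.Icc 0 xs) := by
    apply monotoneOn_of_deriv_nonneg (convex_Icc 0 xs)
    · intro x hx
      exact (hg1' x hx.1).continuousAt.continuousWithinAt
    · intro x hx
      rw [interior_Icc] at hx
      exact (hg1' x hx.1.le).differentiableAt.differentiableWithinAt
    · intro x hx
      rw [interior_Icc] at hx
      rw [(hg1' x hx.1.le).deriv]
      exact (hg2pos x hx.1.le hx.2).le
  have hconc : ConcaveOn ℝ (Set.Icc 0 xs) h := by
    apply AntitoneOn.concaveOn_of_deriv (convex_Icc 0 xs)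
    · intro x hx
      exact (hh' x hx.1).continuousAt.continuousWithinAt
    · intro x hx
      rw [interior_Icc] at hx
      exact (hh' x hx.1.le).differentiableAt.differentiableWithinAt
    · intro x hx y hy hxy
      rw [interior_Icc] at hx hy
      rw [hderivh x hx.1.le, hderivh y hy.1.le]
      have := hg1mono ⟨hx.1.le, hx.2.le⟩ ⟨hy.1.le, hy.2.le⟩ hxy
      linarith
  have hh0 : h 0 = 0 := by simp [hhdef, hg0]
  have hhxs : 0 ≤ h xs := hmid xs (Set.mem_Icc.2 ⟨le_refl xs, hxsPt.le⟩)
  have hlo : ∀ ξ ∈ Set.Icc (0:ℝ) xs, 0 ≤ h ξ := by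
    intro ξ hξ
    have hseg : ξ ∈ segment ℝ (0:ℝ) xs := by
      rw [segment_eq_Icc hxs.le]; exact hξ
    have := hconc.ge_on_segment (Set.left_mem_Icc.2 hxs.le) (Set.right_mem_Icc.2 hxs.le) hseg
    rw [hh0] at this
    exact le_trans (le_min (le_refl 0) hhxs) this
  intro ξ hξ
  have hfin : 0 ≤ h ξ := by
    rcases le_or_gt ξ xs with h1 | h1
    · exact hlo ξ ⟨hξ, h1⟩
    rcases le_or_gt ξ Pt with h2 | h2
    · exact hmid ξ ⟨h1.le, h2⟩
    · exact hhi ξ h2.le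
  simp only [hhdef, hgdef, hg1def, hLdef] at hfin ⊢
  linarith

open MeasureTheory

lemma integrable_dirac'' {f : ℝ → ℝ} (hf : Measurable f) (a : ℝ) :
    Integrable f (Measure.dirac a) := by
  refine ⟨hf.aestronglyMeasurable, ?_⟩
  rw [HasFiniteIntegral, lintegral_dirac a]
  exact ENNReal.coe_lt_top

theorem stmt13 (α PFA : ℝ) (hα : 0 < α) (hPFA0 : 0 < PFA) (hPFA1 : PFA < Real.exp (-2))
    (f : ℝ → ℝ) (hf : f = fun P : ℝ => Real.exp (Real.log PFA / (1 + α * P)))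
    (Pt : ℝ) (hPt : 0 < Pt) (htangent : f Pt - f 0 = deriv f Pt * Pt)
    (lamt : ℝ) (hlamt : lamt = (f Pt - f 0) / Pt)
    (P : ℝ) (hP0 : 0 ≤ P) (hPPt : P ≤ Pt)
    (μstar : Measure ℝ)
    (hμstar : μstar = ENNReal.ofReal (1 - P / Pt) • Measure.dirac (0 : ℝ)
        + ENNReal.ofReal (P / Pt) • Measure.dirac Pt) :
    IsLUB {r : ℝ | ∃ μ : Measure ℝ, IsProbabilityMeasure μ ∧ μ (Set.Iio 0) = 0 ∧
        Integrable (fun ξ : ℝ => ξ) μ ∧ (∫ ξ, ξ ∂μ) ≤ P ∧ r = ∫ ξ, f ξ ∂μ}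
      (f 0 + lamt * P) ∧
    (IsProbabilityMeasure μstar ∧ μstar (Set.Iio 0) = 0 ∧
      Integrable (fun ξ : ℝ => ξ) μstar ∧ (∫ ξ, ξ ∂μstar) ≤ P ∧
      (∫ ξ, f ξ ∂μstar) = f 0 + lamt * P) := by
  set c : ℝ := Real.log PFA with hcdef
  have hc : c < -2 := by
    rw [hcdef]
    have := Real.log_lt_log hPFA0 hPFA1
    simpa [Real.log_exp] using this
  have huPt : (0:ℝ) < 1 + α * Pt := by nlinarith
  have hf0 : f 0 = Real.exp c := by rw [hf]; norm_num
  have hfPt : f Pt = Real.exp (c / (1 + α * Pt)) := by rw [hf]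
  have hfder : deriv f Pt = Real.exp (c/(1+α*Pt)) * (-(c*α)/(1+α*Pt)^2) := by
    rw [hf]; exact (hasDerivAt_g c α Pt huPt.ne').deriv
  have htan : Real.exp (c/(1+α*Pt)) - Real.exp c
      = (Real.exp (c/(1+α*Pt)) * (-(c*α)/(1+α*Pt)^2)) * Pt := by
    have h := htangent
    rw [hfPt, hf0, hfder] at h
    exact h
  have hlam : lamt = Real.exp (c/(1+α*Pt)) * (-(c*α)/(1+α*Pt)^2) := by
    rw [hlamt, ← hfder, htangent, mul_div_assoc, div_self hPt.ne', mul_one]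
  have hlampos : 0 < lamt := by
    rw [hlam]
    have h1 : 0 < -(c*α) := by nlinarith
    have h2 : (0:ℝ) < (1+α*Pt)^2 := by positivity
    exact mul_pos (Real.exp_pos _) (div_pos h1 h2)
  -- pointwise tangent-line bound
  have hpw : ∀ ξ : ℝ, 0 ≤ ξ → f ξ ≤ f 0 + lamt * ξ := by
    intro ξ hξ
    have := key α c hα hc Pt hPt htan ξ hξ
    rw [hf0, hlam, hf]
    exact this
  -- boundedness on [0,∞)
  have hfbd : ∀ ξ : ℝ, 0 ≤ ξ → ‖f ξ‖ ≤ 1 := by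
    intro ξ hξ
    have hu : (0:ℝ) < 1 + α * ξ := by nlinarith
    rw [hf]
    simp only [Real.norm_eq_abs, Real.abs_exp]
    rw [Real.exp_le_one_iff]
    exact div_nonpos_iff.2 (Or.inr ⟨by linarith, hu.le⟩)
  have hfm : Measurable f := by
    rw [hf]
    exact (measurable_const.div (measurable_const.add (measurable_id'.const_mul α))).exp
  -- upper bound over all admissible measures
  have hub : ∀ r ∈ {r : ℝ | ∃ μ : Measure ℝ, IsProbabilityMeasure μ ∧ μ (Set.Iio 0) = 0 ∧
      Integrable (fun ξ : ℝ => ξ) μ ∧ (∫ ξ, ξ ∂μ) ≤ P ∧ r = ∫ ξ, f ξ ∂μ},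
      r ≤ f 0 + lamt * P := by
    rintro r ⟨μ, hprob, hnull, hint, hle, hr⟩
    have hae : ∀ᵐ ξ ∂μ, 0 ≤ ξ := by
      rw [ae_iff]
      convert hnull using 2
      ext x
      simp [not_le]
    have hIf : Integrable f μ := by
      refine Integrable.mono' (integrable_const 1) hfm.aestronglyMeasurable ?_
      filter_upwards [hae] with ξ hξ
      exact hfbd ξ hξ
    have hIline : Integrable (fun ξ : ℝ => f 0 + lamt * ξ) μ :=
      (integrable_const (f 0)).add (hint.const_mul lamt)
    have hle2 : (∫ ξ, f ξ ∂μ) ≤ ∫ ξ, (f 0 + lamt * ξ) ∂μ := by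
      refine integral_mono_ae hIf hIline ?_
      filter_upwards [hae] with ξ hξ
      exact hpw ξ hξ
    have heq : (∫ ξ, (f 0 + lamt * ξ) ∂μ) = f 0 + lamt * (∫ ξ, ξ ∂μ) := by
      rw [integral_add (integrable_const (f 0)) (hint.const_mul lamt),
        integral_const, integral_const_mul]
      simp [measure_univ]
    rw [hr]
    calc (∫ ξ, f ξ ∂μ) ≤ f 0 + lamt * (∫ ξ, ξ ∂μ) := by rw [← heq]; exact hle2
      _ ≤ f 0 + lamt * P := by nlinarith
  -- μstar properties
  have h1 : 0 ≤ 1 - P/Pt := by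
    have := (div_le_one hPt).2 hPPt; linarith
  have h2 : 0 ≤ P/Pt := div_nonneg hP0 hPt.le
  have hprobs : IsProbabilityMeasure μstar := by
    constructor
    rw [hμstar]
    simp only [Measure.add_apply, Measure.smul_apply, Measure.dirac_apply_of_mem (Set.mem_univ _),
      smul_eq_mul, mul_one]
    rw [← ENNReal.ofReal_add h1 h2]
    norm_num
  have hnulls : μstar (Set.Iio 0) = 0 := by
    rw [hμstar]
    simp [Measure.dirac_apply' _ measurableSet_Iio, Set.indicator_apply, hPt.not_gt]
  have hints : Integrable (fun ξ : ℝ => ξ) μstar := by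
    rw [hμstar]
    exact ((integrable_dirac'' measurable_id' 0).smul_measure ENNReal.ofReal_ne_top).add_measure
      ((integrable_dirac'' measurable_id' Pt).smul_measure ENNReal.ofReal_ne_top)
  have hintval : (∫ ξ, ξ ∂μstar) = P := by
    rw [hμstar, integral_add_measure
        (((integrable_dirac'' measurable_id' 0).smul_measure ENNReal.ofReal_ne_top))
        (((integrable_dirac'' measurable_id' Pt).smul_measure ENNReal.ofReal_ne_top)),
      integral_smul_measure, integral_smul_measure, integral_dirac, integral_dirac,
      ENNReal.toReal_ofReal h1, ENNReal.toReal_ofReal h2]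
    simp only [smul_eq_mul, mul_zero, zero_add]
    field_simp
  have hfval : (∫ ξ, f ξ ∂μstar) = f 0 + lamt * P := by
    rw [hμstar, integral_add_measure
        (((integrable_dirac'' hfm 0).smul_measure ENNReal.ofReal_ne_top))
        (((integrable_dirac'' hfm Pt).smul_measure ENNReal.ofReal_ne_top)),
      integral_smul_measure, integral_smul_measure, integral_dirac, integral_dirac,
      ENNReal.toReal_ofReal h1, ENNReal.toReal_ofReal h2]
    simp only [smul_eq_mul]
    rw [hlamt]
    field_simp
    ring
  refine ⟨⟨hub, ?_⟩, hprobs, hnulls, hints, le_of_eq hintval, hfval⟩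
  intro b hb
  exact hb ⟨μstar, hprobs, hnulls, hints, le_of_eq hintval, hfval.symm⟩
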